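/- arXiv:2504.17543 — 2 statements merged into one kernel-verified Lean document; each statement's English description precedes it below -/
import Mathlib

section
/- If Y = [[1, dᵀ],[d, X]] is positive semidefinite with X symmetric having all entries in {0,1} and d = diag(X), then d_j = X_{jj} for all j and Y = y yᵀ for the {0,1}-vector y = (1, d); in particular Y has rank one. -/
/-!
By the Schur complement of the corner entry `1`, `Y ⪰ 0` gives `X - d dᵀ ⪰ 0`. The diagonal of
`X - d dᵀ` is `X_ii - X_ii²`, which vanishes because `X_ii ∈ {0, 1}`; a positive semidefinite
matrix of trace zero is zero, so `X = d dᵀ` and hence `Y = y yᵀ` with `y = (1, d) ≠ 0`.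
-/

/-- The bordered matrix `[[1, dᵀ], [d, X]]`. -/
def borderMat' (n : ℕ) (d : Fin n → ℝ) (X : Matrix (Fin n) (Fin n) ℝ) :
    Matrix (Fin 1 ⊕ Fin n) (Fin 1 ⊕ Fin n) ℝ :=
  Matrix.fromBlocks (fun _ _ => 1) (fun _ j => d j) (fun i _ => d i) X

namespace Matrix

variable {m n K : Type*} [Fintype n] [Field K]

theorem rank_pos_of_ne_zero {A : Matrix m n K} (hA : A ≠ 0) : 0 < A.rank := by
  classical
  rw [rank, Module.finrank_pos_iff, Submodule.nontrivial_iff_ne_bot, ne_eq, LinearMap.range_eq_bot]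
  exact fun h => hA (toLin'.injective (by rw [toLin'_apply', h, map_zero]))

theorem rank_vecMulVec_eq_one {w : m → K} {v : n → K} (hw : w ≠ 0) (hv : v ≠ 0) :
    (vecMulVec w v).rank = 1 := by
  refine (rank_vecMulVec_le w v).antisymm (rank_pos_of_ne_zero fun h => ?_)
  obtain ⟨i, hi⟩ := Function.ne_iff.mp hw
  obtain ⟨j, hj⟩ := Function.ne_iff.mp hv
  exact mul_ne_zero hi hj congr($h i j)

end Matrix

open Matrix

theorem borderMat'_eq_fromBlocks (n : ℕ) (d : Fin n → ℝ) (X : Matrix (Fin n) (Fin n) ℝ) :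
    borderMat' n d X = fromBlocks 1 (replicateRow (Fin 1) d) (replicateRow (Fin 1) d)ᴴ X := by
  ext (i | i) (j | j) <;> simp [borderMat', fromBlocks, Fin.fin_one_eq_zero]

theorem borderMat'_vecMulVec (n : ℕ) (d : Fin n → ℝ) :
    borderMat' n d (vecMulVec d d) =
      vecMulVec (Sum.elim (fun _ => 1) d) (Sum.elim (fun _ => 1) d) := by
  ext (i | i) (j | j) <;> simp [borderMat', fromBlocks, vecMulVec_apply]

theorem Matrix.PosSemidef.sub_vecMulVec_of_borderMat' {n : ℕ} {d : Fin n → ℝ}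
    {X : Matrix (Fin n) (Fin n) ℝ} (h : (borderMat' n d X).PosSemidef) :
    (X - vecMulVec d d).PosSemidef := by
  have : Invertible (1 : Matrix (Fin 1) (Fin 1) ℝ) := invertibleOne
  rw [borderMat'_eq_fromBlocks, PosDef.fromBlocks₁₁ _ _ PosDef.one, inv_one, Matrix.mul_one,
    conjTranspose_replicateRow, star_trivial] at h
  rw [vecMulVec_eq (Fin 1)]
  exact h

theorem stmt_6_general (n : ℕ) (X : Matrix (Fin n) (Fin n) ℝ)
    (hX01 : ∀ i j, X i j = 0 ∨ X i j = 1) (d : Fin n → ℝ) (hd : d = fun i => X i i)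
    (hY : (borderMat' n d X).PosSemidef) :
    (∀ j, d j = X j j) ∧
      borderMat' n d X =
        Matrix.vecMulVec (Sum.elim (fun _ => (1 : ℝ)) d) (Sum.elim (fun _ => (1 : ℝ)) d) ∧
      (borderMat' n d X).rank = 1 := by
  have hdiag : ∀ i, X i i - X i i * X i i = 0 := fun i => by
    rcases hX01 i i with h | h <;> simp [h]
  have hX : X = vecMulVec d d := by
    rw [← sub_eq_zero, ← hY.sub_vecMulVec_of_borderMat'.trace_eq_zero_iff]
    simp [trace, vecMulVec_apply, hd, hdiag]
  have hy : Sum.elim (fun _ : Fin 1 => (1 : ℝ)) d ≠ 0 :=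
    fun h => one_ne_zero (congrFun h (Sum.inl 0))
  refine ⟨fun j => by rw [hd], ?_⟩
  rw [hX, borderMat'_vecMulVec]
  exact ⟨rfl, rank_vecMulVec_eq_one hy hy⟩

theorem stmt_6 (n : ℕ) (X : Matrix (Fin n) (Fin n) ℝ) (hsymm : X.IsSymm)
    (hX01 : ∀ i j, X i j = 0 ∨ X i j = 1) (d : Fin n → ℝ) (hd : d = fun i => X i i)
    (hY : (borderMat' n d X).PosSemidef) :
    (∀ j, d j = X j j) ∧
      borderMat' n d X =
        Matrix.vecMulVec (Sum.elim (fun _ => (1 : ℝ)) d) (Sum.elim (fun _ => (1 : ℝ)) d) ∧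
      (borderMat' n d X).rank = 1 :=
  stmt_6_general n X hX01 d hd hY
end

section
/- A symmetric {0,1}-matrix that is positive semidefinite has a decomposition into {0,1} rank-one terms restricted consistently: if Y ∈ {0,1}^{(n+1)×(n+1)} is symmetric positive semidefinite with Y_{11} = 1 and Y_{1j} = Y_{jj} for all j, and Y = ∑_{i=1}^r ỹ_i ỹ_iᵀ with each ỹ_i ∈ {0,1}^{n+1}, then exactly one ỹ_i has first coordinate 1, and Y equals ỹ_i ỹ_iᵀ for that vector; in particular rank(Y) = 1. -/
theorem stmt_18 (n r : ℕ) (Y : Matrix (Fin (n + 1)) (Fin (n + 1)) ℝ)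
    (hsymm : Y.IsSymm) (h01 : ∀ i j, Y i j = 0 ∨ Y i j = 1) (hpsd : Y.PosSemidef)
    (h11 : Y 0 0 = 1) (hrow : ∀ j, Y 0 j = Y j j)
    (y : Fin r → Fin (n + 1) → ℝ) (hy01 : ∀ i j, y i j = 0 ∨ y i j = 1)
    (hdecomp : Y = ∑ i, Matrix.vecMulVec (y i) (y i)) :
    (∃! i : Fin r, y i 0 = 1) ∧
      (∀ i : Fin r, y i 0 = 1 → Y = Matrix.vecMulVec (y i) (y i)) ∧
      Y.rank = 1 := by
  classical
  have hent : ∀ j k, Y j k = ∑ i, y i j * y i k := by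
    intro j k
    rw [hdecomp]
    simp [Matrix.sum_apply, Matrix.vecMulVec_apply]
  have hsq : ∀ i j, y i j * y i j = y i j := by
    intro i j; rcases hy01 i j with h | h <;> simp [h]
  have hnn : ∀ i j, (0:ℝ) ≤ y i j := by
    intro i j; rcases hy01 i j with h | h <;> simp [h]
  have hsum0 : ∑ i, y i 0 = 1 := by
    have h := hent 0 0
    rw [h11] at h
    simpa [hsq] using h.symm
  have hex : ∃ i, y i 0 = 1 := by
    by_contra h
    push_neg at h
    have hz : ∀ i, y i 0 = 0 := fun i => (hy01 i 0).resolve_right (h i)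
    simp [hz] at hsum0
  obtain ⟨i₀, hi₀⟩ := hex
  have huniq : ∀ i, y i 0 = 1 → i = i₀ := by
    intro i hi
    by_contra hne
    have hs := Finset.add_sum_erase Finset.univ (fun k => y k 0) (Finset.mem_univ i₀)
    have hj : y i 0 ≤ ∑ k ∈ Finset.univ.erase i₀, y k 0 :=
      Finset.single_le_sum (fun k _ => hnn k 0) (by simp [hne])
    have hs' : y i₀ 0 + ∑ x ∈ Finset.univ.erase i₀, y x 0 = ∑ x : Fin r, y x 0 := hs
    rw [hsum0] at hs'
    rw [hi] at hj
    rw [hi₀] at hs'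
    linarith
  have hz0 : ∀ i, i ≠ i₀ → y i 0 = 0 := fun i hne =>
    (hy01 i 0).resolve_right (fun h => hne (huniq i h))
  -- all other vectors vanish
  have hzero : ∀ i, i ≠ i₀ → ∀ j, y i j = 0 := by
    intro i hne j
    have h0j : Y 0 j = y i₀ j := by
      rw [hent 0 j, Finset.sum_eq_single i₀]
      · rw [hi₀, one_mul]
      · intro k _ hk; rw [hz0 k hk, zero_mul]
      · simp
    have hjj : Y j j = ∑ k, y k j := by
      rw [hent j j]; simp [hsq]
    have hsum : ∑ k, y k j = y i₀ j := by
      rw [← hjj, ← hrow j, h0j]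
    have hs := Finset.add_sum_erase Finset.univ (fun k => y k j) (Finset.mem_univ i₀)
    rw [hsum] at hs
    have herase : ∑ k ∈ Finset.univ.erase i₀, y k j = 0 := by linarith
    have := (Finset.sum_eq_zero_iff_of_nonneg (fun k _ => hnn k j)).mp herase
    exact this i (by simp [hne])
  have hY : Y = Matrix.vecMulVec (y i₀) (y i₀) := by
    rw [hdecomp, Finset.sum_eq_single i₀]
    · intro k _ hk
      ext a b
      simp [Matrix.vecMulVec_apply, hzero k hk]
    · simp
  refine ⟨⟨i₀, hi₀, huniq⟩, fun i hi => by rw [huniq i hi]; exact hY, ?_⟩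
  -- rank = 1
  have hle : Y.rank ≤ 1 := by
    rw [hY, Matrix.vecMulVec_eq (Fin 1)]
    calc (Matrix.replicateCol (Fin 1) (y i₀) * Matrix.replicateRow (Fin 1) (y i₀)).rank
        ≤ (Matrix.replicateCol (Fin 1) (y i₀)).rank := Matrix.rank_mul_le_left _ _
      _ ≤ Fintype.card (Fin 1) := Matrix.rank_le_card_width _
      _ = 1 := by simp
  have hne : Y.rank ≠ 0 := by
    intro h0
    have hr : LinearMap.range Y.mulVecLin = ⊥ := by
      have := Submodule.finrank_eq_zero.mp h0
      exact this
    have hv : Y.mulVec (Pi.single 0 1) = 0 := by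
      have : Y.mulVecLin (Pi.single 0 1) ∈ LinearMap.range Y.mulVecLin :=
        LinearMap.mem_range_self _ _
      rw [hr] at this
      simpa [Matrix.mulVecLin] using this
    have := congrFun hv 0
    rw [Matrix.mulVec_single] at this
    simp at this
    exact one_ne_zero (this ▸ h11).symm
  omega
end
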